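/- arXiv:1505.01340 — 3 statements merged into one kernel-verified Lean document; each statement's English description precedes it below -/
import Mathlib

section
/- If A ⊆ ℤ⁺ and the preimage φ⁻¹(n) is disjoint from A for some n, then the upper density of A is at most 1 - 2^(-n). -/
/-! The numbers `2 ^ (n - 1) * (2 * j + 1)` with `j < N / 2 ^ n` are distinct elements of
`φ⁻¹(n) ∩ [1, N]`, so a set `A` avoiding `φ⁻¹(n)` has at most `N - ⌊N / 2 ^ n⌋` elements in
`[1, N]`. Hence `densSeq A N ≤ 1 - 2⁻ⁿ + 1 / N`, and the error term vanishes in the limsup. -/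

open Filter

/-- The counting sequence #({1,...,N} ∩ A)/N used for natural density. -/
noncomputable def densSeq (A : Set ℕ) (N : ℕ) : ℝ :=
  (Nat.card ↥(A ∩ Set.Icc 1 N) : ℝ) / N

/-- `A` has natural density `r`. -/
def HasDensity (A : Set ℕ) (r : ℝ) : Prop :=
  Filter.Tendsto (densSeq A) Filter.atTop (nhds r)

/-- `phi n` is the largest `k` such that `2^(k-1)` divides `n` (for `n ≥ 1`),
i.e. the 2-adic valuation of `n` plus one. -/
def phi (n : ℕ) : ℕ := padicValNat 2 n + 1

/-- A set of positive integers is almost decidable if some computable set of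
natural density one intersects it in a computable set. -/
def AlmostDecidable (S : Set ℕ) : Prop :=
  ∃ R : Set ℕ, ComputablePred (· ∈ R) ∧ HasDensity R 1 ∧
    ComputablePred (fun x => x ∈ R ∧ x ∈ S)

/-- A (Turing) universal partially computable unary function. -/
def Universal (U : ℕ →. ℕ) : Prop :=
  Partrec U ∧ ∃ C : ℕ → ℕ → ℕ, Computable₂ C ∧
    ∀ F : ℕ →. ℕ, Partrec F → ∃ g : ℕ, ∀ x, 1 ≤ x → U (C g x) = F x

lemma phi_two_pow_mul_odd (m j : ℕ) : phi (2 ^ m * (2 * j + 1)) = m + 1 := by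
  have hodd : ¬ 2 ∣ 2 * j + 1 := by omega
  rw [phi, padicValNat.mul (by positivity) (by omega), padicValNat.prime_pow,
    padicValNat.eq_zero_of_not_dvd hodd]

lemma ncard_Icc_one (N : ℕ) : (Set.Icc 1 N).ncard = N := by
  rw [← Finset.coe_Icc, Set.ncard_coe_finset, Nat.card_Icc, Nat.add_sub_cancel]

lemma densSeq_nonneg (A : Set ℕ) (N : ℕ) : 0 ≤ densSeq A N := by
  unfold densSeq; positivity

lemma densSeq_add_densSeq_le_one {A B : Set ℕ} (h : Disjoint A B) (N : ℕ) :
    densSeq A N + densSeq B N ≤ 1 := by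
  have hfin : (Set.Icc 1 N).Finite := Set.finite_Icc 1 N
  have hcard : Nat.card ↥(A ∩ Set.Icc 1 N) + Nat.card ↥(B ∩ Set.Icc 1 N) ≤ N := by
    simp only [Nat.card_coe_set_eq]
    rw [← Set.ncard_union_eq (h.mono Set.inter_subset_left Set.inter_subset_left)
      (hfin.inter_of_right A) (hfin.inter_of_right B), ← Set.union_inter_distrib_right]
    conv_rhs => rw [← ncard_Icc_one N]
    exact Set.ncard_le_ncard Set.inter_subset_right hfin
  rcases N.eq_zero_or_pos with rfl | hN
  · simp [densSeq]
  · rw [densSeq, densSeq, ← add_div, div_le_one (by positivity)]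
    exact_mod_cast hcard

lemma div_two_pow_le_card_phi_eq (m N : ℕ) :
    N / 2 ^ (m + 1) ≤ Nat.card ↥({k : ℕ | 1 ≤ k ∧ phi k = m + 1} ∩ Set.Icc 1 N) := by
  rw [Nat.card_coe_set_eq]
  calc N / 2 ^ (m + 1) = (Set.Iio (N / 2 ^ (m + 1))).ncard := by
        rw [← Finset.coe_range, Set.ncard_coe_finset, Finset.card_range]
    _ ≤ _ := by
      refine Set.ncard_le_ncard_of_injOn (fun j => 2 ^ m * (2 * j + 1)) ?_ ?_
        ((Set.finite_Icc 1 N).inter_of_right _)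
      · intro j (hj : j < N / 2 ^ (m + 1))
        have hpos : 1 ≤ 2 ^ m * (2 * j + 1) := Nat.one_le_iff_ne_zero.2 (by positivity)
        have hle : 2 ^ m * (2 * j + 1) ≤ N := calc
          2 ^ m * (2 * j + 1) ≤ 2 ^ m * (2 * (N / 2 ^ (m + 1))) := by gcongr; omega
          _ = N / 2 ^ (m + 1) * 2 ^ (m + 1) := by ring
          _ ≤ N := Nat.div_mul_le_self N _
        exact ⟨⟨hpos, phi_two_pow_mul_odd m j⟩, hpos, hle⟩
      · intro a _ b _ hab
        have := Nat.eq_of_mul_eq_mul_left (by positivity) hab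
        omega

lemma inv_two_pow_sub_le_densSeq_phi_eq {n N : ℕ} (hn : 1 ≤ n) (hN : 0 < N) :
    ((2 : ℝ) ^ n)⁻¹ - 1 / N ≤ densSeq {k : ℕ | 1 ≤ k ∧ phi k = n} N := by
  obtain ⟨m, rfl⟩ : ∃ m, n = m + 1 := ⟨n - 1, by omega⟩
  have hfloor : (N : ℝ) / 2 ^ (m + 1) - 1 ≤ (N / 2 ^ (m + 1) : ℕ) := by
    have := Nat.sub_one_lt_floor ((N : ℝ) / ((2 ^ (m + 1) : ℕ) : ℝ))
    rw [Nat.floor_div_eq_div] at this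
    push_cast at this
    exact this.le
  have hcount : ((N / 2 ^ (m + 1) : ℕ) : ℝ)
      ≤ Nat.card ↥({k : ℕ | 1 ≤ k ∧ phi k = m + 1} ∩ Set.Icc 1 N) :=
    mod_cast div_two_pow_le_card_phi_eq m N
  have hNpos : (0 : ℝ) < N := by exact_mod_cast hN
  calc ((2 : ℝ) ^ (m + 1))⁻¹ - 1 / N = ((N : ℝ) / 2 ^ (m + 1) - 1) / N := by
        field_simp
    _ ≤ _ := by rw [densSeq]; gcongr; linarith

lemma limsup_le_of_eventually_le_add_one_div {u : ℕ → ℝ} {c : ℝ} (hu : ∀ N, 0 ≤ u N)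
    (h : ∀ᶠ N : ℕ in atTop, u N ≤ c + 1 / N) : limsup u atTop ≤ c := by
  have hlim : Tendsto (fun N : ℕ => c + 1 / (N : ℝ)) atTop (nhds c) := by
    simpa using (tendsto_const_nhds (x := c)).add (tendsto_one_div_atTop_nhds_zero_nat (𝕜 := ℝ))
  calc limsup u atTop ≤ limsup (fun N : ℕ => c + 1 / (N : ℝ)) atTop :=
        limsup_le_limsup h (isCoboundedUnder_le_of_le atTop hu) hlim.isBoundedUnder_le
    _ = c := hlim.limsup_eq

theorem stmt_4 (A : Set ℕ) (n : ℕ) (hn : 1 ≤ n)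
    (hdisj : {k : ℕ | 1 ≤ k ∧ phi k = n} ∩ A = ∅) :
    Filter.limsup (densSeq A) Filter.atTop ≤ 1 - ((2 : ℝ) ^ n)⁻¹ := by
  have hAB : Disjoint A {k : ℕ | 1 ≤ k ∧ phi k = n} :=
    Set.disjoint_iff_inter_eq_empty.2 (by rw [Set.inter_comm, hdisj])
  refine limsup_le_of_eventually_le_add_one_div (densSeq_nonneg A) ?_
  filter_upwards [eventually_gt_atTop 0] with N hN
  linarith [densSeq_add_densSeq_le_one hAB N, inv_two_pow_sub_le_densSeq_phi_eq hn hN]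
end

section
/- There exist infinitely many universal partially computable functions U : ℤ⁺ → ℤ⁺ whose halting set dom(U) has natural density 1 and is almost decidable: namely, if V is universal, then U defined by U(x) = V(y) if x = y² and U(x) = 0 otherwise, is universal, dom(U) is generic, and the set of non-squares is a generic decidable set whose intersection with dom(U) is decidable. -/
/-!
Nothing is lost by composing a universal `V` with the computable map `y ↦ y²`, so the function
equal to `V (√x)` on squares and to a constant elsewhere is still universal. It halts on every
non-square, and since only `√N` of the numbers `1, …, N` are squares, its halting set contains
the decidable set of non-squares, which has density `1`; inside that set the halting set is
all of it, hence decidable. Varying the constant gives infinitely many such functions.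
-/

open Filter Topology

lemma densSeq_le_one (A : Set ℕ) (N : ℕ) : densSeq A N ≤ 1 := by
  refine div_le_one_of_le₀ ?_ (Nat.cast_nonneg N)
  calc (Nat.card ↥(A ∩ Set.Icc 1 N) : ℝ) ≤ Nat.card ↥(Set.Icc 1 N) := by
        exact_mod_cast Nat.card_mono (Set.finite_Icc 1 N) Set.inter_subset_right
    _ = N := by simp

lemma tendsto_natSqrt_div_self_atTop : Tendsto (fun N : ℕ ↦ (Nat.sqrt N : ℝ) / N) atTop (𝓝 0) := by
  have hsqrt : Tendsto Nat.sqrt atTop atTop :=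
    tendsto_atTop_atTop.2 fun b ↦ ⟨b * b, fun N hN ↦ Nat.le_sqrt.2 hN⟩
  have hinv : Tendsto (fun N : ℕ ↦ ((Nat.sqrt N : ℝ))⁻¹) atTop (𝓝 0) :=
    tendsto_inv_atTop_zero.comp (tendsto_natCast_atTop_atTop.comp hsqrt)
  refine tendsto_of_tendsto_of_tendsto_of_le_of_le' tendsto_const_nhds hinv
    (Eventually.of_forall fun N ↦ by positivity) ?_
  filter_upwards [eventually_ge_atTop 1] with N hN
  have hs : (0 : ℝ) < Nat.sqrt N := by exact_mod_cast Nat.sqrt_pos.2 hN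
  rw [div_le_iff₀ (by exact_mod_cast hN), inv_mul_eq_div, le_div_iff₀ hs]
  exact_mod_cast Nat.sqrt_le N

/-- Only the `√N` squares `1², …, (√N)²` of `[1, N]` can be missing from `A`. -/
lemma sub_sqrt_le_card_inter_Icc {A : Set ℕ} (hA : ∀ x, 1 ≤ x → (¬ ∃ y, y * y = x) → x ∈ A)
    (N : ℕ) : N - Nat.sqrt N ≤ Nat.card ↥(A ∩ Set.Icc 1 N) := by
  set squares := (fun y : ℕ ↦ y * y) '' Set.Icc 1 (Nat.sqrt N)
  have hcover : Set.Icc 1 N ⊆ (A ∩ Set.Icc 1 N) ∪ squares := by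
    rintro x ⟨hx1, hxN⟩
    by_cases hsq : ∃ y, y * y = x
    · obtain ⟨y, rfl⟩ := hsq
      refine Or.inr ⟨y, ⟨?_, Nat.le_sqrt.2 hxN⟩, rfl⟩
      exact Nat.pos_of_ne_zero fun hy ↦ by simp [hy] at hx1
    · exact Or.inl ⟨hA x hx1 hsq, hx1, hxN⟩
  have hsquares : squares.ncard ≤ Nat.sqrt N :=
    (Set.ncard_image_le (Set.finite_Icc _ _)).trans (by simp [Set.ncard_eq_toFinset_card'])
  have hN : (Set.Icc 1 N).ncard = N := by simp [Set.ncard_eq_toFinset_card']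
  have := (Set.ncard_le_ncard hcover
    (((Set.finite_Icc 1 N).inter_of_right A).union ((Set.finite_Icc _ _).image _))).trans
    (Set.ncard_union_le _ _)
  rw [Nat.card_coe_set_eq]
  omega

lemma hasDensity_one_of_nonsquare_mem {A : Set ℕ}
    (hA : ∀ x, 1 ≤ x → (¬ ∃ y, y * y = x) → x ∈ A) : HasDensity A 1 := by
  have hlower : Tendsto (fun N : ℕ ↦ 1 - (Nat.sqrt N : ℝ) / N) atTop (𝓝 1) := by
    simpa using tendsto_const_nhds.sub tendsto_natSqrt_div_self_atTop
  refine tendsto_of_tendsto_of_tendsto_of_le_of_le' hlower tendsto_const_nhds ?_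
    (Eventually.of_forall (densSeq_le_one A))
  filter_upwards [eventually_ge_atTop 1] with N hN
  have hN' : (0 : ℝ) < N := by exact_mod_cast hN
  have hcard : ((N - Nat.sqrt N : ℕ) : ℝ) ≤ Nat.card ↥(A ∩ Set.Icc 1 N) := by
    exact_mod_cast sub_sqrt_le_card_inter_Icc hA N
  rw [Nat.cast_sub (Nat.sqrt_le_self N)] at hcard
  rw [densSeq, le_div_iff₀ hN', sub_mul, one_mul, div_mul_cancel₀ _ hN'.ne']
  linarith

lemma computablePred_sqrt_mul_self_eq : ComputablePred fun x : ℕ ↦ Nat.sqrt x * Nat.sqrt x = x :=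
  (PrimrecRel.comp Primrec.eq (Primrec.nat_mul.comp Primrec.nat_sqrt Primrec.nat_sqrt)
    Primrec.id).computablePred

lemma computablePred_not_exists_mul_self_eq :
    ComputablePred fun x : ℕ ↦ ¬ ∃ y, y * y = x := by
  simpa only [Nat.exists_mul_self] using computablePred_sqrt_mul_self_eq.not

def onSquares (V : ℕ →. ℕ) (k : ℕ) : ℕ →. ℕ := fun x ↦
  if Nat.sqrt x * Nat.sqrt x = x then V (Nat.sqrt x) else Part.some k

namespace onSquares

variable (V : ℕ →. ℕ) (k : ℕ)

lemma apply_mul_self (y : ℕ) : onSquares V k (y * y) = V y := by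
  simp [onSquares, Nat.sqrt_eq]

lemma apply_of_not_exists_mul_self_eq {x : ℕ} (hx : ¬ ∃ y, y * y = x) :
    onSquares V k x = Part.some k := by
  rw [Nat.exists_mul_self] at hx
  simp [onSquares, hx]

lemma dom_of_not_exists_mul_self_eq {x : ℕ} (hx : ¬ ∃ y, y * y = x) : (onSquares V k x).Dom := by
  simp [apply_of_not_exists_mul_self_eq V k hx]

lemma injective : Function.Injective (onSquares V) := by
  intro k l hkl
  have h2 : ¬ ∃ y, y * y = 2 := by rintro ⟨_ | _ | y, hy⟩ <;> nlinarith
  simpa [apply_of_not_exists_mul_self_eq V _ h2] using congrFun hkl 2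

variable {V}

lemma partrec (hV : Partrec V) : Partrec (onSquares V k) := by
  refine (Partrec.cond computablePred_sqrt_mul_self_eq.decide (hV.comp Primrec.nat_sqrt.to_comp)
    (Partrec.const' (Part.some k))).of_eq fun x ↦ ?_
  by_cases hx : Nat.sqrt x * Nat.sqrt x = x <;> simp [onSquares, hx]

lemma universal (hV : Universal V) : Universal (onSquares V k) := by
  obtain ⟨hVrec, C, hC, hCV⟩ := hV
  refine ⟨partrec k hVrec, fun g x ↦ C g x * C g x, Primrec.nat_mul.to_comp.comp hC hC, ?_⟩
  intro F hF
  obtain ⟨g, hg⟩ := hCV F hF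
  exact ⟨g, fun x hx ↦ (apply_mul_self V k _).trans (hg x hx)⟩

variable (V)

lemma hasDensity_dom : HasDensity {x | 1 ≤ x ∧ (onSquares V k x).Dom} 1 :=
  hasDensity_one_of_nonsquare_mem fun _ hx hsq ↦ ⟨hx, dom_of_not_exists_mul_self_eq V k hsq⟩

lemma computablePred_not_exists_mul_self_eq_and_dom :
    ComputablePred fun x : ℕ ↦ (¬ ∃ y, y * y = x) ∧ (onSquares V k x).Dom :=
  computablePred_not_exists_mul_self_eq.of_eq fun _ ↦
    ⟨fun hx ↦ ⟨hx, dom_of_not_exists_mul_self_eq V k hx⟩, And.left⟩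

lemma almostDecidable_dom : AlmostDecidable {x | (onSquares V k x).Dom} :=
  ⟨{x | ¬ ∃ y, y * y = x}, computablePred_not_exists_mul_self_eq,
    hasDensity_one_of_nonsquare_mem fun _ _ hsq ↦ hsq,
    computablePred_not_exists_mul_self_eq_and_dom V k⟩

end onSquares

theorem stmt_7 (V : ℕ →. ℕ) (hV : Universal V) (U : ℕ →. ℕ)
    (hU : ∀ x : ℕ, U x =
      if Nat.sqrt x * Nat.sqrt x = x then V (Nat.sqrt x) else Part.some 0) :
    Universal U ∧
    HasDensity {x : ℕ | 1 ≤ x ∧ (U x).Dom} 1 ∧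
    ComputablePred (fun x : ℕ => ¬ ∃ y : ℕ, y * y = x) ∧
    HasDensity {x : ℕ | 1 ≤ x ∧ ¬ ∃ y : ℕ, y * y = x} 1 ∧
    ComputablePred (fun x : ℕ => (¬ ∃ y : ℕ, y * y = x) ∧ (U x).Dom) ∧
    AlmostDecidable {x : ℕ | (U x).Dom} ∧
    {W : ℕ →. ℕ | Universal W ∧ HasDensity {x : ℕ | 1 ≤ x ∧ (W x).Dom} 1 ∧
      AlmostDecidable {x : ℕ | (W x).Dom}}.Infinite := by
  obtain rfl : U = onSquares V 0 := funext hU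
  refine ⟨onSquares.universal 0 hV, onSquares.hasDensity_dom V 0,
    computablePred_not_exists_mul_self_eq,
    hasDensity_one_of_nonsquare_mem fun x hx hsq ↦ ⟨hx, hsq⟩,
    onSquares.computablePred_not_exists_mul_self_eq_and_dom V 0,
    onSquares.almostDecidable_dom V 0, ?_⟩
  exact Set.infinite_of_injective_forall_mem (onSquares.injective V) fun k ↦
    ⟨onSquares.universal k hV, onSquares.hasDensity_dom V k, onSquares.almostDecidable_dom V k⟩
end

section
/- Every programmable universal function is universal: if U is partially computable and for every partially computable F there is a constant k such that for all x there exists y ≤ k·x with U(y) = F(x), then there exists a partially computable C_U : ℤ⁺ × ℤ⁺ → ℤ⁺ such that for every partially computable F there are constants g, c with U(C_U(g,x)) = F(x) and C_U(g,x) ≤ c·x for all x. -/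
open Filter

/-!
A program `g` encodes a pair `(F, k)` of a code for `F` and the constant of
programmability of `F`. On input `x`, `C g x` first computes `v = F x` and then searches, by
dovetailing over pairs (candidate `y`, number of steps), for some `y ≤ k * x` on which `U`
halts with output `v`. Programmability guarantees that such a `y` exists, so the search halts
exactly when `F x` does, and every value it returns is bounded by `k * x`.
-/

open Nat.Partrec (Code)
open Nat.Partrec.Code Encodable

def findPreimageStep (c : Code) (b v n : ℕ) : Option ℕ :=
  if n.unpair.1 ≤ b ∧ evaln n.unpair.2 c n.unpair.1 = some v then some n.unpair.1 else none

def findPreimageLE (c : Code) (b v : ℕ) : Part ℕ :=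
  Nat.rfindOpt (findPreimageStep c b v)

section findPreimageLE

variable {c : Code} {b v y : ℕ}

theorem mem_findPreimageStep {n : ℕ} :
    y ∈ findPreimageStep c b v n ↔ y = n.unpair.1 ∧ y ≤ b ∧ v ∈ evaln n.unpair.2 c y := by
  unfold findPreimageStep
  split_ifs with h
  · simp only [Option.mem_def, Option.some.injEq]
    constructor
    · rintro rfl; exact ⟨rfl, h⟩
    · rintro ⟨rfl, -⟩; rfl
  · simp only [Option.mem_def, reduceCtorEq, false_iff]
    rintro ⟨rfl, hb, hv⟩
    exact h ⟨hb, hv⟩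

theorem primrec_findPreimageStep (c : Code) :
    Primrec fun p : (ℕ × ℕ) × ℕ => findPreimageStep c p.1.1 p.1.2 p.2 := by
  have hy : Primrec fun p : (ℕ × ℕ) × ℕ => p.2.unpair.1 :=
    Primrec.fst.comp (Primrec.unpair.comp Primrec.snd)
  have ht : Primrec fun p : (ℕ × ℕ) × ℕ => p.2.unpair.2 :=
    Primrec.snd.comp (Primrec.unpair.comp Primrec.snd)
  have heval : Primrec fun p : (ℕ × ℕ) × ℕ => evaln p.2.unpair.2 c p.2.unpair.1 :=
    primrec_evaln.comp ((ht.pair (Primrec.const c)).pair hy)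
  have hcond : PrimrecPred fun p : (ℕ × ℕ) × ℕ =>
      p.2.unpair.1 ≤ p.1.1 ∧ evaln p.2.unpair.2 c p.2.unpair.1 = some p.1.2 :=
    (Primrec.nat_le.comp hy (Primrec.fst.comp Primrec.fst)).and
      (Primrec.eq.comp heval (Primrec.option_some.comp (Primrec.snd.comp Primrec.fst)))
  exact Primrec.ite hcond (Primrec.option_some.comp hy) (Primrec.const none)

theorem partrec₂_findPreimageLE (c : Code) : Partrec₂ (findPreimageLE c) :=
  Partrec.rfindOpt (primrec_findPreimageStep c).to_comp

theorem le_and_mem_eval_of_mem_findPreimageLE (h : y ∈ findPreimageLE c b v) :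
    y ≤ b ∧ v ∈ c.eval y := by
  obtain ⟨n, hn⟩ := Nat.rfindOpt_spec h
  obtain ⟨-, hb, hv⟩ := mem_findPreimageStep.1 hn
  exact ⟨hb, evaln_sound hv⟩

theorem findPreimageLE_dom (h : ∃ y ≤ b, v ∈ c.eval y) : (findPreimageLE c b v).Dom := by
  obtain ⟨y, hb, hv⟩ := h
  obtain ⟨t, ht⟩ := evaln_complete.1 hv
  exact Nat.rfindOpt_dom.2 ⟨Nat.pair y t, y, mem_findPreimageStep.2 (by simpa using ⟨hb, ht⟩)⟩

theorem bind_findPreimageLE_bind_eval {p : Part ℕ} (h : ∀ v ∈ p, ∃ y ≤ b, v ∈ c.eval y) :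
    (p.bind (findPreimageLE c b)).bind c.eval = p := by
  ext v
  constructor
  · intro hv
    obtain ⟨y, hy, hv⟩ := Part.mem_bind_iff.1 hv
    obtain ⟨w, hw, hy⟩ := Part.mem_bind_iff.1 hy
    rwa [Part.mem_unique hv (le_and_mem_eval_of_mem_findPreimageLE hy).2]
  · intro hv
    have hdom := findPreimageLE_dom (h v hv)
    exact Part.mem_bind (Part.mem_bind hv (Part.get_mem hdom))
      (le_and_mem_eval_of_mem_findPreimageLE (Part.get_mem hdom)).2

theorem le_of_mem_bind_findPreimageLE {p : Part ℕ} (h : y ∈ p.bind (findPreimageLE c b)) :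
    y ≤ b := by
  obtain ⟨v, -, hy⟩ := Part.mem_bind_iff.1 h
  exact (le_and_mem_eval_of_mem_findPreimageLE hy).1

end findPreimageLE

def translator (c : Code) (g x : ℕ) : Part ℕ :=
  ((Denumerable.ofNat Code g.unpair.1).eval x).bind (findPreimageLE c (g.unpair.2 * x))

theorem partrec₂_translator (c : Code) : Partrec₂ (translator c) := by
  have hcode : Partrec fun p : ℕ × ℕ => (Denumerable.ofNat Code p.1.unpair.1).eval p.2 :=
    eval_part.comp
      ((Computable.ofNat Code).comp
        (Computable.fst.comp (Primrec.unpair.to_comp.comp Computable.fst)))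
      Computable.snd
  have hslope : Computable fun p : ℕ × ℕ => p.1.unpair.2 * p.2 :=
    Primrec.to_comp <| Primrec.nat_mul.comp
      (Primrec.snd.comp (Primrec.unpair.comp Primrec.fst)) Primrec.snd
  exact hcode.bind ((partrec₂_findPreimageLE c).comp (hslope.comp Computable.fst) Computable.snd)

theorem translator_pair_encode (c d : Code) (k x : ℕ) :
    translator c (Nat.pair (encode d) k) x = (d.eval x).bind (findPreimageLE c (k * x)) := by
  simp [translator]

theorem stmt_16 (U : ℕ →. ℕ) (hU : Partrec U)
    (hprog : ∀ F : ℕ →. ℕ, Partrec F →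
      ∃ k : ℕ, ∀ x : ℕ, 1 ≤ x → ∃ y : ℕ, y ≤ k * x ∧ U y = F x) :
    ∃ C : ℕ → ℕ →. ℕ, Partrec₂ C ∧
      ∀ F : ℕ →. ℕ, Partrec F → ∃ g c : ℕ, ∀ x : ℕ, 1 ≤ x →
        (C g x).bind U = F x ∧ ∀ y ∈ C g x, y ≤ c * x := by
  obtain ⟨cU, rfl⟩ := Code.exists_code.1 (Partrec.nat_iff.1 hU)
  refine ⟨translator cU, partrec₂_translator cU, fun F hF => ?_⟩
  obtain ⟨k, hk⟩ := hprog F hF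
  obtain ⟨cF, rfl⟩ := Code.exists_code.1 (Partrec.nat_iff.1 hF)
  refine ⟨Nat.pair (encode cF) k, k, fun x hx => ?_⟩
  rw [translator_pair_encode]
  have hpre : ∀ v ∈ cF.eval x, ∃ y ≤ k * x, v ∈ cU.eval y := by
    obtain ⟨y, hy, hUF⟩ := hk x hx
    exact fun v hv => ⟨y, hy, hUF ▸ hv⟩
  exact ⟨bind_findPreimageLE_bind_eval hpre, fun y hy => le_of_mem_bind_findPreimageLE hy⟩
end
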